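/- arXiv:1006.0092 — 2 statements merged into one kernel-verified Lean document; each statement's English description precedes it below -/
import Mathlib

section
/- If A is a local ring in which p lies in the maximal ideal, then W_n(A) is a local ring with maximal ideal gh_0^{-1}(𝔪_A), where gh_0 : W_n(A) → A is the zeroth ghost (projection) map. -/
/-!
The kernel of the truncation `W_{n+2}(A) → W_{n+1}(A)` consists of the `V^{n+1} a`, and
`V^{n+1} a · V^{n+1} b = V^{n+1}(p^{n+1} a b)`. Since `p` lies in the Jacobson radical of `A`, this
kernel lies in the Jacobson radical, so every truncation is a local homomorphism, and by induction
a truncated Witt vector is a unit as soon as its zeroth coefficient is. Thus `gh_0` is a local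
homomorphism to the local ring `A`, which makes `W_n(A)` local with maximal ideal `gh_0⁻¹(𝔪_A)`.
-/

open Function

theorem RingHom.isLocalHom_of_ker_le_jacobson {R S : Type*} [CommRing R] [CommRing S]
    (f : R →+* S) (hf : Surjective f) (hker : RingHom.ker f ≤ Ideal.jacobson ⊥) :
    IsLocalHom f where
  map_nonunit a ha := by
    obtain ⟨b', hb'⟩ := ha.exists_right_inv
    obtain ⟨b, rfl⟩ := hf b'
    have hab : a * b - 1 ∈ RingHom.ker f := by simp [hb']
    have := Ideal.mem_jacobson_bot.mp (hker hab) 1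
    rw [mul_one, sub_add_cancel] at this
    exact isUnit_of_mul_isUnit_left this

section

variable {p : ℕ} [Fact p.Prime] {R : Type*} [CommRing R]

namespace WittVector

theorem ghostComponent_zero_apply (x : WittVector p R) : ghostComponent 0 x = x.coeff 0 := by
  rw [ghostComponent_apply, wittPolynomial_zero, MvPolynomial.aeval_X]

theorem iterate_frobenius_iterate_verschiebung (x : WittVector p R) (n : ℕ) :
    frobenius^[n] (verschiebung^[n] x) = x * (p : WittVector p R) ^ n := by
  induction n generalizing x with
  | zero => simp
  | succ n ih =>
    rw [iterate_succ_apply, iterate_succ_apply', frobenius_verschiebung, iterate_map_mul,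
      iterate_fixed (map_natCast frobenius p), ih, pow_succ, mul_assoc]

theorem iterate_verschiebung_mul_iterate_verschiebung (x y : WittVector p R) (n : ℕ) :
    verschiebung^[n] x * verschiebung^[n] y =
      verschiebung^[n] (x * y * (p : WittVector p R) ^ n) := by
  rw [iterate_verschiebung_mul_left, iterate_frobenius_iterate_verschiebung, mul_assoc]

theorem truncate_iterate_verschiebung_eq_zero {x : WittVector p R} (hx : x.coeff 0 = 0)
    (n : ℕ) : truncate (n + 1) (verschiebung^[n] x) = 0 := by
  rw [← RingHom.mem_ker, mem_ker_truncate]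
  intro i hi
  rcases Nat.lt_succ_iff_lt_or_eq.mp hi with hi | rfl
  · exact iterate_verschiebung_coeff_eq_zero x hi
  · simpa [hx] using iterate_verschiebung_coeff x i 0

/-- The inverse is `1 + V^{n+1} [b₀]` with `a₀ + b₀ + p^{n+1} a₀ b₀ = 0`, i.e.
`b₀ = -a₀ / (1 + p^{n+1} a₀)`. -/
theorem isUnit_truncate_one_add_iterate_verschiebung (hp : (p : R) ∈ Ideal.jacobson ⊥) (n : ℕ)
    (a : WittVector p R) : IsUnit (truncate (n + 2) (1 + verschiebung^[n + 1] a)) := by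
  set c := a.coeff 0
  obtain ⟨u, hu⟩ : IsUnit (1 + (p : R) ^ (n + 1) * c) := by
    rw [add_comm]
    exact Ideal.mem_jacobson_bot.mp (Ideal.pow_mem_of_mem _ hp _ n.succ_pos) c
  set b := teichmuller p (-c * ↑u⁻¹)
  set s := a + b + a * b * (p : WittVector p R) ^ (n + 1)
  have hs : s.coeff 0 = 0 := by
    change constantCoeff s = 0
    simp only [s, b, map_add, map_mul, map_pow, map_natCast, constantCoeff_apply,
      teichmuller_coeff_zero]
    linear_combination c * ↑u⁻¹ * hu - c * u.inv_mul
  have hprod : (1 + verschiebung^[n + 1] a) * (1 + verschiebung^[n + 1] b) =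
      1 + verschiebung^[n + 1] s := by
    simp only [s, iterate_map_add, ← iterate_verschiebung_mul_iterate_verschiebung]
    ring
  refine IsUnit.of_mul_eq_one (truncate (n + 2) (1 + verschiebung^[n + 1] b)) ?_
  rw [← map_mul, hprod, map_add, map_one, truncate_iterate_verschiebung_eq_zero hs, add_zero]

end WittVector

namespace TruncatedWittVector

theorem ker_truncate_succ_le_jacobson (hp : (p : R) ∈ Ideal.jacobson ⊥) (n : ℕ) :
    RingHom.ker (truncate (p := p) (R := R) (Nat.le_succ (n + 1))) ≤ Ideal.jacobson ⊥ := by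
  intro x hx
  obtain ⟨y, rfl⟩ := WittVector.truncate_surjective p (n + 2) R x
  rw [RingHom.mem_ker, truncate_wittVector_truncate, ← RingHom.mem_ker,
    WittVector.mem_ker_truncate] at hx
  rw [WittVector.eq_iterate_verschiebung hx, Ideal.mem_jacobson_bot]
  intro r
  obtain ⟨t, rfl⟩ := WittVector.truncate_surjective p (n + 2) R r
  have := WittVector.isUnit_truncate_one_add_iterate_verschiebung hp n
    (y.shift (n + 1) * WittVector.frobenius^[n + 1] t)
  rwa [← WittVector.iterate_verschiebung_mul_left, map_add, map_one, map_mul,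
    add_comm (1 : TruncatedWittVector p (n + 2) R)] at this

theorem isLocalHom_truncate_succ (hp : (p : R) ∈ Ideal.jacobson ⊥) (n : ℕ) :
    IsLocalHom (truncate (p := p) (R := R) (Nat.le_succ (n + 1))) :=
  (truncate _).isLocalHom_of_ker_le_jacobson (truncate_surjective _)
    (ker_truncate_succ_le_jacobson hp n)

end TruncatedWittVector

namespace WittVector

theorem isUnit_truncate_of_isUnit_coeff_zero (hp : (p : R) ∈ Ideal.jacobson ⊥) (n : ℕ)
    {x : WittVector p R} (hx : IsUnit (x.coeff 0)) : IsUnit (truncate (n + 1) x) := by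
  induction n with
  | zero =>
    have : truncate 1 x = truncate 1 (teichmuller p (x.coeff 0)) := by
      ext i
      rw [Fin.fin_one_eq_zero i, coeff_truncate, coeff_truncate, Fin.val_zero,
        teichmuller_coeff_zero]
    rw [this]
    exact hx.map ((truncate 1).toMonoidHom.comp (teichmuller p))
  | succ n ih =>
    have hloc := TruncatedWittVector.isLocalHom_truncate_succ (p := p) hp n
    apply isUnit_of_map_unit (TruncatedWittVector.truncate (Nat.le_succ (n + 1)))
    rwa [TruncatedWittVector.truncate_wittVector_truncate]

end WittVector

end

/-- If `A` is a local ring in which `p` lies in the maximal ideal, then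
`W_n(A)` is a local ring with maximal ideal `gh_0⁻¹(𝔪_A)`, where `gh_0 : W_n(A) → A` is the
zeroth ghost (projection) map. (Normalized indexing: `W_n = TruncatedWittVector p (n+1)`;
`gh_0` is characterized via the truncation map by the zeroth ghost component of `W(A)`.) -/
theorem witt_of_local_is_local (p : ℕ) [Fact p.Prime] (n : ℕ)
    (A : Type) [CommRing A] [IsLocalRing A]
    (hp : (p : A) ∈ IsLocalRing.maximalIdeal A)
    (g0 : TruncatedWittVector p (n + 1) A →+* A)
    (hg0 : ∀ x : WittVector p A,
      g0 (WittVector.truncate (n + 1) x) = WittVector.ghostComponent 0 x) :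
    ∃ h : IsLocalRing (TruncatedWittVector p (n + 1) A),
      @IsLocalRing.maximalIdeal (TruncatedWittVector p (n + 1) A) _ h =
        Ideal.comap g0 (IsLocalRing.maximalIdeal A) := by
  rw [← IsLocalRing.jacobson_eq_maximalIdeal ⊥ bot_ne_top] at hp
  have : IsLocalHom g0 := ⟨fun y hy => by
    obtain ⟨x, rfl⟩ := WittVector.truncate_surjective p (n + 1) A y
    rw [hg0, WittVector.ghostComponent_zero_apply] at hy
    exact WittVector.isUnit_truncate_of_isUnit_coeff_zero hp n hy⟩
  have hloc := g0.domain_isLocalRing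
  exact ⟨hloc, (IsLocalRing.maximalIdeal_comap g0).symm⟩
end

section
/- Let k be a field of characteristic p. Then W_1(k) (p-typical Witt vectors of length 1, i.e., length-2 classical Witt vectors) is a local ring whose maximal ideal V_p(k) is isomorphic as a W_1(k)-module to k with the W_1(k)-action through the composite W_1(k) → k → k, a ↦ a^p twisted, i.e., the maximal ideal squared is zero and the maximal ideal is isomorphic to k^{1/p} as a k-vector space; consequently W_1(k) is noetherian if and only if k has a finite p-basis (equivalently [k : k^p] < ∞). -/
/-!
An element of `W_2(k)` with vanishing constant coefficient is `V(a)` for a unique `a : k`, and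
the projection formula `V(x · F y) = V x · y` gives `w · V(a) = V(w₀ ^ p · a)`; in particular
`V(a) · V(b) = 0`. So the maximal ideal, the kernel of the constant coefficient, is `k` with
the Frobenius-twisted action of `W_2(k) → k`. Since the residue field is noetherian, `W_2(k)` is
noetherian iff this ideal is, i.e. iff `k` is finite over itself via Frobenius.
-/

theorem isNoetherianRing_iff_isNoetherian_of_isMaximal {R : Type*} [CommRing R] (m : Ideal R)
    [hm : m.IsMaximal] : IsNoetherianRing R ↔ IsNoetherian R m := by
  have : IsSimpleModule R (R ⧸ m) := isSimpleModule_iff_isCoatom.mpr (Ideal.isMaximal_def.mp hm)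
  rw [isNoetherianRing_iff, isNoetherian_iff_submodule_quotient m]
  exact and_iff_left inferInstance

namespace WittVector

variable {p : ℕ} [Fact p.Prime] {k : Type*} [Field k] [CharP k p]

instance isLocalRing : IsLocalRing (WittVector p k) := by
  refine IsLocalRing.of_isUnit_or_isUnit_one_sub_self fun x => ?_
  by_cases hx : x.coeff 0 = 0
  · refine Or.inr (isUnit_of_coeff_zero_ne_zero _ ?_)
    rw [← constantCoeff_apply, map_sub, map_one, constantCoeff_apply, hx, sub_zero]
    exact one_ne_zero
  · exact Or.inl (isUnit_of_coeff_zero_ne_zero x hx)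

end WittVector

namespace TruncatedWittVector

variable {p : ℕ} [Fact p.Prime] {n : ℕ} {R : Type*} [CommRing R]

variable (p n R) in
noncomputable def constantCoeff [NeZero n] : TruncatedWittVector p n R →+* R :=
  (WittVector.truncate n).liftOfSurjective (WittVector.truncate_surjective p n R)
    ⟨WittVector.constantCoeff, fun x hx => by
      rw [WittVector.mem_ker_truncate] at hx
      exact hx 0 (Nat.pos_of_neZero n)⟩

@[simp]
theorem constantCoeff_apply [NeZero n] (x : TruncatedWittVector p n R) :
    constantCoeff p n R x = x.coeff 0 := by
  obtain ⟨x, rfl⟩ := WittVector.truncate_surjective p n R x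
  rw [constantCoeff, RingHom.liftOfSurjective_comp_apply, WittVector.coeff_truncate]
  rfl

theorem constantCoeff_surjective [NeZero n] : Function.Surjective (constantCoeff p n R) :=
  fun a => ⟨WittVector.truncate n (WittVector.teichmuller p a), by simp⟩

theorem truncate_two_verschiebung_congr {x y : WittVector p R} (h : x.coeff 0 = y.coeff 0) :
    WittVector.truncate 2 (WittVector.verschiebung x) =
      WittVector.truncate 2 (WittVector.verschiebung y) := by
  ext i
  fin_cases i <;> simp [WittVector.coeff_truncate, h]

-- `V : W_1(R) → W_2(R)` with `W_1(R) = R`; the Teichmüller lift is just one choice of preimage,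
-- any other gives the same value by `truncate_two_verschiebung`.
variable (p R) in
noncomputable def verschiebung : R →+ TruncatedWittVector p 2 R where
  toFun a := WittVector.truncate 2 (WittVector.verschiebung (WittVector.teichmuller p a))
  map_zero' := by rw [WittVector.teichmuller_zero, map_zero, map_zero]
  map_add' a b := by
    rw [← map_add, ← map_add]
    exact truncate_two_verschiebung_congr (by simp [WittVector.add_coeff_zero])

theorem truncate_two_verschiebung (x : WittVector p R) :
    WittVector.truncate 2 (WittVector.verschiebung x) = verschiebung p R (x.coeff 0) :=
  truncate_two_verschiebung_congr (by simp)

@[simp]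
theorem coeff_zero_verschiebung (a : R) : (verschiebung p R a).coeff 0 = 0 := by
  simp [verschiebung, WittVector.coeff_truncate]

@[simp]
theorem coeff_one_verschiebung (a : R) : (verschiebung p R a).coeff 1 = a := by
  simp [verschiebung, WittVector.coeff_truncate]

theorem eq_verschiebung_of_coeff_zero_eq_zero {x : TruncatedWittVector p 2 R}
    (hx : x.coeff 0 = 0) : x = verschiebung p R (x.coeff 1) := by
  ext i
  fin_cases i <;> simp [hx]

theorem mul_verschiebung [CharP R p] (w : TruncatedWittVector p 2 R) (a : R) :
    w * verschiebung p R a = verschiebung p R (w.coeff 0 ^ p * a) := by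
  obtain ⟨w, rfl⟩ := WittVector.truncate_surjective p 2 R w
  rw [show verschiebung p R a = WittVector.truncate 2 (WittVector.verschiebung
    (WittVector.teichmuller p a)) from rfl, ← map_mul, mul_comm,
    ← WittVector.verschiebung_mul_frobenius, truncate_two_verschiebung]
  simp [WittVector.mul_coeff_zero, WittVector.coeff_frobenius_charP, WittVector.coeff_truncate,
    mul_comm]

theorem verschiebung_mul_verschiebung [CharP R p] (a b : R) :
    verschiebung p R a * verschiebung p R b = 0 := by
  rw [mul_verschiebung, coeff_zero_verschiebung, zero_pow (Fact.out : p.Prime).ne_zero,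
    zero_mul, map_zero]

section Field

variable {k : Type*} [Field k] [CharP k p]

instance isLocalRing [NeZero n] : IsLocalRing (TruncatedWittVector p n k) :=
  have : Nontrivial (TruncatedWittVector p n k) := (constantCoeff p n k).domain_nontrivial
  IsLocalRing.of_surjective' (WittVector.truncate n) (WittVector.truncate_surjective p n k)

theorem mem_maximalIdeal_iff [NeZero n] {x : TruncatedWittVector p n k} :
    x ∈ IsLocalRing.maximalIdeal (TruncatedWittVector p n k) ↔ x.coeff 0 = 0 := by
  rw [← IsLocalRing.ker_eq_maximalIdeal _ constantCoeff_surjective, RingHom.mem_ker,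
    constantCoeff_apply]

theorem maximalIdeal_sq_eq_bot :
    IsLocalRing.maximalIdeal (TruncatedWittVector p 2 k) ^ 2 = ⊥ := by
  rw [pow_two, eq_bot_iff, Ideal.mul_le]
  intro x hx y hy
  rw [eq_verschiebung_of_coeff_zero_eq_zero (mem_maximalIdeal_iff.mp hx),
    eq_verschiebung_of_coeff_zero_eq_zero (mem_maximalIdeal_iff.mp hy),
    verschiebung_mul_verschiebung]
  exact Ideal.zero_mem ⊥

variable (p k) in
noncomputable def verschiebungEquiv :
    k ≃+ IsLocalRing.maximalIdeal (TruncatedWittVector p 2 k) where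
  toFun a := ⟨verschiebung p k a, mem_maximalIdeal_iff.mpr (coeff_zero_verschiebung a)⟩
  invFun x := (x : TruncatedWittVector p 2 k).coeff 1
  left_inv := coeff_one_verschiebung
  right_inv x :=
    Subtype.ext (eq_verschiebung_of_coeff_zero_eq_zero (mem_maximalIdeal_iff.mp x.2)).symm
  map_add' a b := Subtype.ext (map_add _ a b)

theorem isNoetherianRing_iff_finite_frobenius :
    IsNoetherianRing (TruncatedWittVector p 2 k) ↔ (frobenius k p).Finite := by
  -- `k` as a module over itself through Frobenius, as in `RingHom.Finite`; the default
  -- `SMul k k` (multiplication) has to be overridden as well.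
  let _ := (frobenius k p).toAlgebra
  let _ : SMul k k := Algebra.toSMul
  let _ : Module k k := Algebra.toModule
  have : RingHomSurjective (constantCoeff p 2 k) := ⟨constantCoeff_surjective⟩
  let coeffOne :
      IsLocalRing.maximalIdeal (TruncatedWittVector p 2 k) →ₛₗ[constantCoeff p 2 k] k :=
    { toFun x := (x : TruncatedWittVector p 2 k).coeff 1
      map_add' := map_add (verschiebungEquiv p k).symm
      map_smul' w x := by
        change (w * (x : TruncatedWittVector p 2 k)).coeff 1 =
          _ • (x : TruncatedWittVector p 2 k).coeff 1
        rw [eq_verschiebung_of_coeff_zero_eq_zero (mem_maximalIdeal_iff.mp x.2)]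
        simp [mul_verschiebung, Algebra.smul_def, RingHom.algebraMap_toAlgebra, frobenius_def] }
  calc IsNoetherianRing (TruncatedWittVector p 2 k)
      ↔ IsNoetherian _ (IsLocalRing.maximalIdeal (TruncatedWittVector p 2 k)) :=
        isNoetherianRing_iff_isNoetherian_of_isMaximal _
    _ ↔ IsNoetherian k k :=
        coeffOne.isNoetherian_iff_of_bijective (verschiebungEquiv p k).symm.bijective
    _ ↔ Module.Finite k k := IsNoetherian.iff_fg
    _ ↔ (frobenius k p).Finite := Iff.rfl

end Field

end TruncatedWittVector

/-- Let `k` be a field of characteristic `p`. Then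
`W_1(k) = TruncatedWittVector p 2 k` (length-2 classical Witt vectors) is a local ring whose
maximal ideal `V_p(k)` squares to zero and is isomorphic, as an additive group, to `k` with
the `W_1(k)`-action twisted by Frobenius (i.e. `[c] · e(a) = e(c^p · a)`), so the maximal
ideal is `k^{1/p}` as a `k`-vector space; consequently `W_1(k)` is noetherian if and only if
`k` has a finite `p`-basis, i.e. `k` is module-finite over `k^p` (expressed as finiteness of
the Frobenius ring map). -/
theorem witt_length_one_of_char_p_field (p : ℕ) [Fact p.Prime]
    (k : Type) [Field k] [CharP k p] :
    ∃ h : IsLocalRing (TruncatedWittVector p 2 k),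
      (@IsLocalRing.maximalIdeal (TruncatedWittVector p 2 k) _ h) ^ 2 = ⊥ ∧
      (∃ e : k ≃+ ↥(@IsLocalRing.maximalIdeal (TruncatedWittVector p 2 k) _ h),
        ∀ c a : k, ((e (c ^ p * a) : TruncatedWittVector p 2 k)) =
          WittVector.truncate 2 (WittVector.teichmuller p c) * (e a : TruncatedWittVector p 2 k)) ∧
      (IsNoetherianRing (TruncatedWittVector p 2 k) ↔ (frobenius k p).Finite) := by
  refine ⟨inferInstance, TruncatedWittVector.maximalIdeal_sq_eq_bot,
    ⟨TruncatedWittVector.verschiebungEquiv p k, fun c a => ?_⟩,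
    TruncatedWittVector.isNoetherianRing_iff_finite_frobenius⟩
  simp [TruncatedWittVector.verschiebungEquiv, TruncatedWittVector.mul_verschiebung,
    WittVector.coeff_truncate]
end
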